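/- In the universal enveloping algebra U(g) of the Lie algebra g with basis {X,U,V,E,Z} and brackets [U,V]=E, [X,U]=V, [X,V]=Z, the symmetrization map β: S(g) → U(g) satisfies β⁻¹(A³) = ā³ − 2Z²E², where A = 2UZ − V² ∈ U(g) and ā = 2UZ − V² ∈ S(g). -/

import Mathlib

/-!
In `U(g)` write `u, v, e, z` for the images of `U, V, E, Z`: then `v u = u v - e`, and `e`, `z`
commute with everything in sight. Split `A = a - b` with `a = 2 u z`, `b = v²`. The commutator
`c = a b - b a = 4 z e v` commutes with `b`, and `d = a c - c a = 8 z² e²`, so `A³` is the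
commutative binomial expansion corrected by `3 a c - 3 b c - d`. Normal-ordering the
symmetrizations gives `β(U²V²) = u²v² - 2 e u v + e²/2` and `β(UV⁴) = u v⁴ - 2 e v³`; comparing,
everything cancels except `-8 z²e² + 6 z²e² = -2 z²e²`.
-/

open UniversalEnvelopingAlgebra

section CommutatorCalculus

variable {R : Type*} [Ring R]

theorem mul_mul_eq_of_mul_eq {a b c : R} (h : a * b = c) (x : R) : a * (b * x) = c * x := by
  rw [← mul_assoc, h]

theorem sub_pow_three_of_commutators {a b c d : R} (hba : b * a = a * b - c)
    (hca : c * a = a * c - d) (hbc : Commute b c) :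
    (a - b) ^ 3 = a ^ 3 - 3 * (a ^ 2 * b) + 3 * (a * b ^ 2) - b ^ 3
      + 3 * (a * c) - 3 * (b * c) - d := by
  simp only [pow_succ, pow_zero, one_mul, sub_mul, mul_sub, mul_assoc, mul_mul_eq_of_mul_eq hba,
    hba, hca, hbc.eq]
  noncomm_ring

variable {u v e : R}

theorem sum_perms_sq_mul_sq (hvu : v * u = u * v - e) (heu : Commute e u) (hev : Commute e v) :
    u * u * v * v + u * v * u * v + u * v * v * u + v * u * u * v + v * u * v * u
      + v * v * u * u = 6 * (u ^ 2 * v ^ 2) - 12 * (e * u * v) + 3 * e ^ 2 := by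
  simp only [pow_succ, pow_zero, one_mul, sub_mul, mul_sub, mul_assoc, mul_mul_eq_of_mul_eq hvu,
    hvu, heu.eq, hev.eq]
  noncomm_ring

theorem sum_perms_mul_pow_four (hvu : v * u = u * v - e) (hev : Commute e v) :
    u * v ^ 4 + v * u * v ^ 3 + v ^ 2 * u * v ^ 2 + v ^ 3 * u * v + v ^ 4 * u
      = 5 * (u * v ^ 4) - 10 * (e * v ^ 3) := by
  simp only [pow_succ, pow_zero, one_mul, sub_mul, mul_sub, mul_assoc, mul_mul_eq_of_mul_eq hvu,
    hvu, hev.eq, hev.left_comm]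
  noncomm_ring

variable {z : R}

theorem two_mul_mul_sub_sq_pow_three (hvu : v * u = u * v - e) (heu : Commute e u)
    (hev : Commute e v) (hzu : Commute z u) (hzv : Commute z v) (hze : Commute z e) :
    (2 * (u * z) - v ^ 2) ^ 3 = 8 * (u ^ 3 * z ^ 3) - 12 * (z ^ 2 * (u ^ 2 * v ^ 2))
      + 24 * (z ^ 2 * (e * u * v)) - 8 * (z ^ 2 * e ^ 2) + 6 * (z * (u * v ^ 4))
      - 12 * (z * (e * v ^ 3)) - v ^ 6 := by
  have hbc : Commute (v ^ 2) (4 * (z * e * v)) :=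
    (Commute.ofNat_right _ 4).mul_right
      (((hzv.mul_left hev).mul_left (Commute.refl v)).symm.pow_left 2)
  rw [sub_pow_three_of_commutators (c := 4 * (z * e * v)) (d := 8 * (z ^ 2 * e ^ 2)) ?_ ?_ hbc]
  all_goals
    simp only [← Nat.ofNat_nsmul_eq_mul, smul_mul_assoc, mul_smul_comm, pow_succ, pow_zero,
      one_mul, sub_mul, mul_sub, mul_assoc, mul_mul_eq_of_mul_eq hvu, heu.eq, heu.left_comm,
      hev.eq, hev.left_comm, hzu.left_comm, hzv.eq, hzv.left_comm, hze.eq, hze.left_comm]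
    noncomm_ring

theorem two_mul_mul_sub_sq_pow_three_eq_symmetrization {𝕜 : Type*} [Field 𝕜] [CharZero 𝕜]
    [Algebra 𝕜 R] (hvu : v * u = u * v - e) (heu : Commute e u) (hev : Commute e v)
    (hzu : Commute z u) (hzv : Commute z v) (hze : Commute z e) :
    (2 * (u * z) - v ^ 2) ^ 3 = 8 * (u ^ 3 * z ^ 3)
      - 12 * (z ^ 2 * ((6 : 𝕜)⁻¹ • (u * u * v * v + u * v * u * v + u * v * v * u
          + v * u * u * v + v * u * v * u + v * v * u * u)))
      + 6 * (z * ((5 : 𝕜)⁻¹ • (u * v ^ 4 + v * u * v ^ 3 + v ^ 2 * u * v ^ 2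
          + v ^ 3 * u * v + v ^ 4 * u)))
      - v ^ 6 - 2 * (z ^ 2 * e ^ 2) := by
  rw [two_mul_mul_sub_sq_pow_three hvu heu hev hzu hzv hze, sum_perms_sq_mul_sq hvu heu hev,
    sum_perms_mul_pow_four hvu hev]
  simp only [← Nat.ofNat_nsmul_eq_mul, mul_smul_comm, smul_sub, smul_add, mul_sub, mul_add]
  module

end CommutatorCalculus

namespace UniversalEnvelopingAlgebra

variable {R L : Type*} [CommRing R] [LieRing L] [LieAlgebra R L]

attribute [local instance 100] LieRing.ofAssociativeRing

theorem ι_lie (x y : L) : ι R ⁅x, y⁆ = ι R x * ι R y - ι R y * ι R x := by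
  rw [LieHom.map_lie, Ring.lie_def]

theorem commute_ι_of_lie_eq_zero {x y : L} (h : ⁅x, y⁆ = 0) : Commute (ι R x) (ι R y) :=
  sub_eq_zero.mp <| by rw [← ι_lie, h, map_zero]

end UniversalEnvelopingAlgebra

/-- `β⁻¹(A³) = ā³ − 2Z²E²` is stated as `A³ = β(ā³) − 2Z²E²`, where, since `Z` and `E` are
central in `g`, `β(ā³) = 8U³Z³ − 12Z²·β(U²V²) + 6Z·β(UV⁴) − V⁶` with
`β(U²V²) = (UUVV + UVUV + UVVU + VUUV + VUVU + VVUU)/6` and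
`β(UV⁴) = (UV⁴ + VUV³ + V²UV² + V³UV + V⁴U)/5`. -/
theorem stmt_10_general (L : Type) [LieRing L] [LieAlgebra ℝ L]
    (U V E Z : L)
    (hUV : ⁅U, V⁆ = E)
    (hUE : ⁅U, E⁆ = 0) (hUZ : ⁅U, Z⁆ = 0)
    (hVE : ⁅V, E⁆ = 0) (hVZ : ⁅V, Z⁆ = 0) (hEZ : ⁅E, Z⁆ = 0)
    (A : UniversalEnvelopingAlgebra ℝ L)
    (hA : A = 2 * (ι ℝ U * ι ℝ Z) - (ι ℝ V) ^ 2) :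
    A ^ 3 =
      8 * ((ι ℝ U) ^ 3 * (ι ℝ Z) ^ 3)
      - 12 * ((ι ℝ Z) ^ 2 *
          ((6 : ℝ)⁻¹ • (ι ℝ U * ι ℝ U * ι ℝ V * ι ℝ V
            + ι ℝ U * ι ℝ V * ι ℝ U * ι ℝ V
            + ι ℝ U * ι ℝ V * ι ℝ V * ι ℝ U
            + ι ℝ V * ι ℝ U * ι ℝ U * ι ℝ V
            + ι ℝ V * ι ℝ U * ι ℝ V * ι ℝ U
            + ι ℝ V * ι ℝ V * ι ℝ U * ι ℝ U)))
      + 6 * (ι ℝ Z *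
          ((5 : ℝ)⁻¹ • (ι ℝ U * (ι ℝ V) ^ 4
            + ι ℝ V * ι ℝ U * (ι ℝ V) ^ 3
            + (ι ℝ V) ^ 2 * ι ℝ U * (ι ℝ V) ^ 2
            + (ι ℝ V) ^ 3 * ι ℝ U * ι ℝ V
            + (ι ℝ V) ^ 4 * ι ℝ U)))
      - (ι ℝ V) ^ 6
      - 2 * ((ι ℝ Z) ^ 2 * (ι ℝ E) ^ 2) := by
  have hvu : ι ℝ V * ι ℝ U = ι ℝ U * ι ℝ V - ι ℝ E := by
    rw [← hUV, ι_lie, sub_sub_cancel]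
  rw [hA]
  exact two_mul_mul_sub_sq_pow_three_eq_symmetrization hvu (commute_ι_of_lie_eq_zero hUE).symm
    (commute_ι_of_lie_eq_zero hVE).symm (commute_ι_of_lie_eq_zero hUZ).symm
    (commute_ι_of_lie_eq_zero hVZ).symm (commute_ι_of_lie_eq_zero hEZ).symm

/-- In `U(g)` for `g = span{X,U,V,E,Z}` with `[U,V]=E`, `[X,U]=V`, `[X,V]=Z`, the PBW
symmetrization `β : S(g) → U(g)` satisfies `β⁻¹(A³) = ā³ − 2Z²E²` for `A = 2UZ − V²`;
equivalently, `A³ = β(ā³) − 2Z²E²`, where (since `Z` and `E` are central in `g`)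
`β(ā³) = 8U³Z³ − 12Z²·β(U²V²) + 6Z·β(UV⁴) − V⁶` with
`β(U²V²) = (UUVV + UVUV + UVVU + VUUV + VUVU + VVUU)/6` and
`β(UV⁴) = (UV⁴ + VUV³ + V²UV² + V³UV + V⁴U)/5`. -/
theorem stmt_10 (L : Type) [LieRing L] [LieAlgebra ℝ L]
    (X U V E Z : L) (b : Module.Basis (Fin 5) ℝ L) (hb : ⇑b = ![X, U, V, E, Z])
    (hUV : ⁅U, V⁆ = E) (hXU : ⁅X, U⁆ = V) (hXV : ⁅X, V⁆ = Z)
    (hXE : ⁅X, E⁆ = 0) (hXZ : ⁅X, Z⁆ = 0) (hUE : ⁅U, E⁆ = 0) (hUZ : ⁅U, Z⁆ = 0)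
    (hVE : ⁅V, E⁆ = 0) (hVZ : ⁅V, Z⁆ = 0) (hEZ : ⁅E, Z⁆ = 0)
    (A : UniversalEnvelopingAlgebra ℝ L)
    (hA : A = 2 * (ι ℝ U * ι ℝ Z) - (ι ℝ V) ^ 2) :
    A ^ 3 =
      8 * ((ι ℝ U) ^ 3 * (ι ℝ Z) ^ 3)
      - 12 * ((ι ℝ Z) ^ 2 *
          ((6 : ℝ)⁻¹ • (ι ℝ U * ι ℝ U * ι ℝ V * ι ℝ V
            + ι ℝ U * ι ℝ V * ι ℝ U * ι ℝ V
            + ι ℝ U * ι ℝ V * ι ℝ V * ι ℝ U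
            + ι ℝ V * ι ℝ U * ι ℝ U * ι ℝ V
            + ι ℝ V * ι ℝ U * ι ℝ V * ι ℝ U
            + ι ℝ V * ι ℝ V * ι ℝ U * ι ℝ U)))
      + 6 * (ι ℝ Z *
          ((5 : ℝ)⁻¹ • (ι ℝ U * (ι ℝ V) ^ 4
            + ι ℝ V * ι ℝ U * (ι ℝ V) ^ 3
            + (ι ℝ V) ^ 2 * ι ℝ U * (ι ℝ V) ^ 2
            + (ι ℝ V) ^ 3 * ι ℝ U * ι ℝ V
            + (ι ℝ V) ^ 4 * ι ℝ U)))
      - (ι ℝ V) ^ 6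
      - 2 * ((ι ℝ Z) ^ 2 * (ι ℝ E) ^ 2) :=
  stmt_10_general L U V E Z hUV hUE hUZ hVE hVZ hEZ A hA
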